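/- For every integer N ≥ 1, every t ∈ ℝ and all x, y ∈ ℝ, with s(t) = sinh(t/2) and c(t) = cosh(t/2), one has ∑_{n=0}^{N−1} e^{tn} φ_n(x) φ_n(y) = √(N/2) · e^{t(N − 1/2)} ∫_0^∞ e^{−s(t)((x+y)z + c(t)z²)} [ φ_N(x + c(t)z) φ_{N−1}(y + c(t)z) + φ_{N−1}(x + c(t)z) φ_N(y + c(t)z) ] dz. -/

import Mathlib

open Real MeasureTheory

/-- Physicists' Hermite polynomials: H₀ = 1, H₁ = 2x, H_{n+2} = 2x H_{n+1} − 2(n+1) H_n. -/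
noncomputable def physHermite : ℕ → ℝ → ℝ
  | 0, _ => 1
  | 1, x => 2 * x
  | n + 2, x => 2 * x * physHermite (n + 1) x - 2 * ((n : ℝ) + 1) * physHermite n x

/-- The n-th Hermite function (harmonic oscillator wave function)
φₙ(x) = (2ⁿ n! √π)^{−1/2} Hₙ(x) e^{−x²/2}. -/
noncomputable def hermiteFn (n : ℕ) (x : ℝ) : ℝ :=
  ((2 : ℝ) ^ n * Nat.factorial n * Real.sqrt Real.pi) ^ (-(1 : ℝ) / 2) *
    physHermite n x * Real.exp (-x ^ 2 / 2)

open Filter Topology Set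
open scoped Polynomial

/-! With `c = cosh (t/2)` and `s = sinh (t/2)`, the damped Hermite functions
`ψₙ(z; w) = exp (-s (w z + c z²/2)) φₙ(w + c z)` obey the ladder equation
`ψₙ' = e^{-t/2} √(n/2) ψₙ₋₁ - e^{t/2} √((n+1)/2) ψₙ₊₁`, which follows from the raising and
lowering relations `φₙ' = √(n/2) φₙ₋₁ - √((n+1)/2) φₙ₊₁`, `x φₙ = √(n/2) φₙ₋₁ + √((n+1)/2) φₙ₊₁`
and from `c ∓ s = e^{∓t/2}`. Consequently the derivative of
`Φ(z) = ∑_{n<N} e^{tn} ψₙ(z; x) ψₙ(z; y)` telescopes to minus the right-hand integrand with its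
prefactor. Since `Φ(0)` is the left-hand side and `Φ` is a polynomial times a Gaussian,
integrating `Φ'` over `(0, ∞)` gives the identity. -/

def IsPolyMulGaussian (f : ℝ → ℝ) : Prop :=
  ∃ (p : ℝ[X]) (a b : ℝ), 0 < a ∧ ∀ z, f z = p.eval z * exp (-a * z ^ 2 + b * z)

lemma tendsto_neg_mul_sq_add_mul_atBot {a : ℝ} (ha : 0 < a) (b : ℝ) :
    Tendsto (fun z : ℝ => -a * z ^ 2 + b * z) atTop atBot := by
  have h : Tendsto (fun z : ℝ => z * (-a * z + b)) atTop atBot :=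
    tendsto_id.atTop_mul_atBot₀ <| tendsto_atBot_add_const_right _ b <|
      tendsto_id.const_mul_atTop_of_neg (neg_neg_iff_pos.mpr ha)
  exact h.congr fun z => by ring

lemma tendsto_pow_mul_exp_neg_mul_sq_add_mul {a : ℝ} (ha : 0 < a) (b : ℝ) (k : ℕ) :
    Tendsto (fun z : ℝ => z ^ k * exp (-a * z ^ 2 + b * z)) atTop (𝓝 0) := by
  have h := (tendsto_pow_mul_exp_neg_atTop_nhds_zero k).mul
    (tendsto_exp_atBot.comp (tendsto_neg_mul_sq_add_mul_atBot ha (b + 1)))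
  rw [zero_mul] at h
  refine h.congr fun z => ?_
  simp only [Function.comp_apply, mul_assoc, ← exp_add]
  ring_nf

namespace IsPolyMulGaussian

variable {f g : ℝ → ℝ}

lemma mul (hf : IsPolyMulGaussian f) (hg : IsPolyMulGaussian g) :
    IsPolyMulGaussian (fun z => f z * g z) := by
  obtain ⟨p, a, b, ha, hf⟩ := hf
  obtain ⟨q, a', b', ha', hg⟩ := hg
  refine ⟨p * q, a + a', b + b', add_pos ha ha', fun z => ?_⟩
  dsimp only
  rw [hf z, hg z, Polynomial.eval_mul, mul_mul_mul_comm, ← exp_add]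
  ring_nf

lemma mul_exp (hf : IsPolyMulGaussian f) (c : ℝ) :
    IsPolyMulGaussian (fun z => f z * exp (c * z)) := by
  obtain ⟨p, a, b, ha, hf⟩ := hf
  refine ⟨p, a, b + c, ha, fun z => ?_⟩
  dsimp only
  rw [hf z, mul_assoc, ← exp_add]
  ring_nf

lemma continuous (hf : IsPolyMulGaussian f) : Continuous f := by
  obtain ⟨p, a, b, -, hf⟩ := hf
  rw [funext hf]
  fun_prop

lemma tendsto_atTop (hf : IsPolyMulGaussian f) : Tendsto f atTop (𝓝 0) := by
  obtain ⟨p, a, b, ha, hf⟩ := hf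
  have h := tendsto_finsetSum (Finset.range (p.natDegree + 1)) fun i _ =>
    (tendsto_pow_mul_exp_neg_mul_sq_add_mul ha b i).const_mul (p.coeff i)
  simp only [mul_zero, Finset.sum_const_zero] at h
  refine h.congr fun z => ?_
  rw [hf, Polynomial.eval_eq_sum_range, Finset.sum_mul]
  simp only [mul_assoc]

lemma integrableOn_Ioi (hf : IsPolyMulGaussian f) (a : ℝ) : IntegrableOn f (Ioi a) := by
  have hbound : f =O[atTop] fun z => exp (-1 * z) := by
    have h := ((hf.mul_exp 1).tendsto_atTop.isBigO_one ℝ).mul (Asymptotics.isBigO_refl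
      (fun z => exp (-1 * z)) atTop)
    refine (h.congr_left fun z => ?_).congr_right fun z => one_mul _
    rw [mul_assoc, ← exp_add]
    simp
  exact integrable_of_isBigO_exp_neg one_pos hf.continuous.continuousOn hbound

end IsPolyMulGaussian

-- `a 0 = 0` makes the truncated index `0 - 1 = 0` harmless: the telescoping sum starts at zero.
lemma hasDerivAt_sum_exp_mul_mul_of_ladder {h k : ℕ → ℝ → ℝ} {a : ℕ → ℝ} (ha : a 0 = 0)
    {t z : ℝ}
    (hh : ∀ n, HasDerivAt (h n)
      (exp (-(t / 2)) * a n * h (n - 1) z - exp (t / 2) * a (n + 1) * h (n + 1) z) z)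
    (hk : ∀ n, HasDerivAt (k n)
      (exp (-(t / 2)) * a n * k (n - 1) z - exp (t / 2) * a (n + 1) * k (n + 1) z) z)
    (N : ℕ) :
    HasDerivAt (fun z => ∑ n ∈ Finset.range N, exp (t * n) * h n z * k n z)
      (-(exp (t * (N - 1 / 2)) * a N * (h N z * k (N - 1) z + h (N - 1) z * k N z))) z := by
  set b : ℕ → ℝ := fun n =>
    exp (t * (n - 1 / 2)) * a n * (h n z * k (n - 1) z + h (n - 1) z * k n z) with hb
  have hstep : ∀ n : ℕ,
      exp (t * n) * (exp (-(t / 2)) * a n * h (n - 1) z - exp (t / 2) * a (n + 1) * h (n + 1) z) *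
          k n z +
        exp (t * n) * h n z *
          (exp (-(t / 2)) * a n * k (n - 1) z - exp (t / 2) * a (n + 1) * k (n + 1) z) =
      b n - b (n + 1) := by
    intro n
    have hlo : exp (t * n) * exp (-(t / 2)) = exp (t * (n - 1 / 2)) := by
      rw [← exp_add]; ring_nf
    have hhi : exp (t * n) * exp (t / 2) = exp (t * (((n + 1 : ℕ) : ℝ) - 1 / 2)) := by
      rw [← exp_add]; push_cast; ring_nf
    simp only [hb, Nat.add_sub_cancel]
    linear_combination (a n * (h (n - 1) z * k n z + h n z * k (n - 1) z)) * hlo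
      - (a (n + 1) * (h (n + 1) z * k n z + h n z * k (n + 1) z)) * hhi
  have hsum := HasDerivAt.fun_sum (u := Finset.range N) fun n _ =>
    ((hh n).const_mul (exp (t * n))).fun_mul (hk n)
  refine hsum.congr_deriv ?_
  rw [Finset.sum_congr rfl fun n _ => hstep n, Finset.sum_range_sub']
  simp [hb, ha]

lemma physHermite_succ (n : ℕ) (x : ℝ) :
    physHermite (n + 1) x = 2 * x * physHermite n x - 2 * n * physHermite (n - 1) x := by
  cases n <;> simp [physHermite]

lemma hasDerivAt_physHermite (n : ℕ) (x : ℝ) :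
    HasDerivAt (physHermite n) (2 * n * physHermite (n - 1) x) x := by
  induction n using Nat.strong_induction_on generalizing x with
  | _ n ih =>
    match n with
    | 0 => simpa [physHermite] using hasDerivAt_const x (1 : ℝ)
    | 1 => simpa [physHermite] using (hasDerivAt_id x).const_mul (2 : ℝ)
    | m + 2 =>
      have h := (((hasDerivAt_id' x).const_mul 2).fun_mul (ih (m + 1) (by omega) x)).fun_sub
        ((ih m (by omega) x).const_mul (2 * ((m : ℝ) + 1)))
      have hfun : physHermite (m + 2) =
          fun y => 2 * y * physHermite (m + 1) y - 2 * ((m : ℝ) + 1) * physHermite m y := by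
        funext y; simp [physHermite]
      rw [hfun]
      refine h.congr_deriv ?_
      simp only [Nat.add_sub_cancel, show m + 2 - 1 = m + 1 by omega, physHermite_succ m x]
      push_cast
      ring

lemma exists_eval_eq_physHermite (n : ℕ) : ∃ p : ℝ[X], ∀ x, physHermite n x = p.eval x := by
  induction n using Nat.strong_induction_on with
  | _ n ih =>
    match n with
    | 0 => exact ⟨1, by simp [physHermite]⟩
    | 1 => exact ⟨Polynomial.C 2 * Polynomial.X, by simp [physHermite]⟩
    | m + 2 =>
      obtain ⟨p₁, hp₁⟩ := ih (m + 1) (by omega)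
      obtain ⟨p₀, hp₀⟩ := ih m (by omega)
      refine ⟨Polynomial.C 2 * Polynomial.X * p₁ - Polynomial.C (2 * ((m : ℝ) + 1)) * p₀,
        fun x => ?_⟩
      simp [physHermite, hp₁ x, hp₀ x]

noncomputable def hermiteNorm (n : ℕ) : ℝ :=
  ((2 : ℝ) ^ n * Nat.factorial n * Real.sqrt Real.pi) ^ (-(1 : ℝ) / 2)

lemma hermiteFn_eq (n : ℕ) (x : ℝ) :
    hermiteFn n x = hermiteNorm n * physHermite n x * exp (-x ^ 2 / 2) := rfl

lemma hermiteNorm_eq_sqrt_mul_hermiteNorm_succ (n : ℕ) :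
    hermiteNorm n = √(2 * ((n : ℝ) + 1)) * hermiteNorm (n + 1) := by
  have hb : (0 : ℝ) < 2 ^ n * Nat.factorial n * √π := by positivity
  have ha : (0 : ℝ) < 2 * ((n : ℝ) + 1) := by positivity
  have hsucc : hermiteNorm (n + 1) = (2 * ((n : ℝ) + 1)) ^ (-(1 : ℝ) / 2) * hermiteNorm n := by
    rw [hermiteNorm, hermiteNorm, ← mul_rpow ha.le hb.le]
    push_cast [pow_succ, Nat.factorial_succ]
    ring_nf
  rw [hsucc, sqrt_eq_rpow, ← mul_assoc, ← rpow_add ha]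
  norm_num

lemma sqrt_mul_hermiteNorm (n : ℕ) :
    √(((n : ℝ) + 1) / 2) * hermiteNorm n = ((n : ℝ) + 1) * hermiteNorm (n + 1) := by
  rw [hermiteNorm_eq_sqrt_mul_hermiteNorm_succ n, ← mul_assoc, ← sqrt_mul (by positivity),
    show ((n : ℝ) + 1) / 2 * (2 * ((n : ℝ) + 1)) = ((n : ℝ) + 1) ^ 2 by ring,
    sqrt_sq (by positivity)]

lemma sqrt_mul_hermiteNorm_succ (n : ℕ) :
    √(((n : ℝ) + 1) / 2) * hermiteNorm (n + 1) = hermiteNorm n / 2 := by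
  rw [hermiteNorm_eq_sqrt_mul_hermiteNorm_succ n,
    show 2 * ((n : ℝ) + 1) = 2 ^ 2 * (((n : ℝ) + 1) / 2) by ring,
    sqrt_mul (by positivity), sqrt_sq (by norm_num)]
  ring

lemma mul_hermiteFn (n : ℕ) (x : ℝ) :
    x * hermiteFn n x =
      √((n : ℝ) / 2) * hermiteFn (n - 1) x + √(((n : ℝ) + 1) / 2) * hermiteFn (n + 1) x := by
  have hup := sqrt_mul_hermiteNorm_succ n
  simp only [hermiteFn_eq, physHermite_succ n x]
  cases n with
  | zero =>
    simp only [Nat.cast_zero, zero_div, sqrt_zero, zero_add] at hup ⊢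
    linear_combination (-2 * x * physHermite 0 x * exp (-x ^ 2 / 2)) * hup
  | succ m =>
    have hdown := sqrt_mul_hermiteNorm m
    simp only [Nat.add_sub_cancel]
    push_cast at hup ⊢
    linear_combination (-physHermite m x * exp (-x ^ 2 / 2)) * hdown
      - ((2 * x * physHermite (m + 1) x - 2 * ((m : ℝ) + 1) * physHermite m x)
        * exp (-x ^ 2 / 2)) * hup

lemma hasDerivAt_hermiteFn (n : ℕ) (x : ℝ) :
    HasDerivAt (hermiteFn n)
      (√((n : ℝ) / 2) * hermiteFn (n - 1) x - √(((n : ℝ) + 1) / 2) * hermiteFn (n + 1) x) x := by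
  have hgauss : HasDerivAt (fun y : ℝ => exp (-y ^ 2 / 2)) (-x * exp (-x ^ 2 / 2)) x := by
    have h := (((hasDerivAt_pow 2 x).fun_neg).div_const 2).exp
    refine h.congr_deriv ?_
    push_cast
    ring
  have h := ((hasDerivAt_physHermite n x).const_mul (hermiteNorm n)).fun_mul hgauss
  refine h.congr_deriv ?_
  have hmul := mul_hermiteFn n x
  cases n with
  | zero =>
    simp only [hermiteFn_eq, CharP.cast_eq_zero, zero_div, sqrt_zero, zero_mul] at hmul ⊢
    linear_combination -hmul
  | succ m =>
    have hdown := sqrt_mul_hermiteNorm m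
    simp only [hermiteFn_eq, Nat.add_sub_cancel] at hmul ⊢
    push_cast at hmul ⊢
    linear_combination -hmul - (2 * physHermite m x * exp (-x ^ 2 / 2)) * hdown

noncomputable def dampedHermite (t w : ℝ) (n : ℕ) (z : ℝ) : ℝ :=
  exp (-sinh (t / 2) * (w * z + cosh (t / 2) * z ^ 2 / 2)) * hermiteFn n (w + cosh (t / 2) * z)

lemma dampedHermite_zero (t w : ℝ) (n : ℕ) : dampedHermite t w n 0 = hermiteFn n w := by
  simp [dampedHermite]

lemma dampedHermite_mul_add_mul (t x y : ℝ) (i j : ℕ) (z : ℝ) :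
    dampedHermite t x i z * dampedHermite t y j z + dampedHermite t x j z * dampedHermite t y i z =
      exp (-sinh (t / 2) * ((x + y) * z + cosh (t / 2) * z ^ 2)) *
        (hermiteFn i (x + cosh (t / 2) * z) * hermiteFn j (y + cosh (t / 2) * z) +
          hermiteFn j (x + cosh (t / 2) * z) * hermiteFn i (y + cosh (t / 2) * z)) := by
  have hgauss : exp (-sinh (t / 2) * (x * z + cosh (t / 2) * z ^ 2 / 2)) *
      exp (-sinh (t / 2) * (y * z + cosh (t / 2) * z ^ 2 / 2)) =
        exp (-sinh (t / 2) * ((x + y) * z + cosh (t / 2) * z ^ 2)) := by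
    rw [← exp_add]
    ring_nf
  simp only [dampedHermite]
  linear_combination (hermiteFn i (x + cosh (t / 2) * z) * hermiteFn j (y + cosh (t / 2) * z) +
    hermiteFn j (x + cosh (t / 2) * z) * hermiteFn i (y + cosh (t / 2) * z)) * hgauss

lemma hasDerivAt_dampedHermite (t w : ℝ) (n : ℕ) (z : ℝ) :
    HasDerivAt (dampedHermite t w n)
      (exp (-(t / 2)) * √((n : ℝ) / 2) * dampedHermite t w (n - 1) z -
        exp (t / 2) * √(((n : ℝ) + 1) / 2) * dampedHermite t w (n + 1) z) z := by
  have hline : HasDerivAt (fun z => w + cosh (t / 2) * z) (cosh (t / 2)) z := by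
    simpa using ((hasDerivAt_id z).const_mul (cosh (t / 2))).const_add w
  have hdamp : HasDerivAt (fun z => exp (-sinh (t / 2) * (w * z + cosh (t / 2) * z ^ 2 / 2)))
      (exp (-sinh (t / 2) * (w * z + cosh (t / 2) * z ^ 2 / 2)) *
        (-sinh (t / 2) * (w + cosh (t / 2) * z))) z := by
    have hexponent : HasDerivAt (fun z => -sinh (t / 2) * (w * z + cosh (t / 2) * z ^ 2 / 2))
        (-sinh (t / 2) * (w + cosh (t / 2) * z)) z := by
      have h := ((((hasDerivAt_id' z).const_mul w).fun_add
        (((hasDerivAt_pow 2 z).const_mul (cosh (t / 2))).div_const 2)).const_mul (-sinh (t / 2)))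
      refine h.congr_deriv ?_
      push_cast
      ring
    exact hexponent.exp
  have h := hdamp.fun_mul ((hasDerivAt_hermiteFn n _).comp z hline)
  refine h.congr_deriv ?_
  have hmul := mul_hermiteFn n (w + cosh (t / 2) * z)
  have hsub := cosh_sub_sinh (t / 2)
  have hadd := cosh_add_sinh (t / 2)
  set E := exp (-sinh (t / 2) * (w * z + cosh (t / 2) * z ^ 2 / 2))
  simp only [dampedHermite, Function.comp_apply]
  linear_combination (-sinh (t / 2) * E) * hmul
    + (E * √((n : ℝ) / 2) * hermiteFn (n - 1) (w + cosh (t / 2) * z)) * hsub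
    - (E * √(((n : ℝ) + 1) / 2) * hermiteFn (n + 1) (w + cosh (t / 2) * z)) * hadd

lemma isPolyMulGaussian_dampedHermite (t w : ℝ) (n : ℕ) :
    IsPolyMulGaussian (dampedHermite t w n) := by
  obtain ⟨q, hq⟩ := exists_eval_eq_physHermite n
  refine ⟨Polynomial.C (hermiteNorm n * exp (-w ^ 2 / 2)) *
      q.comp (Polynomial.C w + Polynomial.C (cosh (t / 2)) * Polynomial.X),
    cosh (t / 2) * exp (t / 2) / 2, -(exp (t / 2) * w), by positivity, fun z => ?_⟩
  simp only [dampedHermite, hermiteFn_eq, hq, Polynomial.eval_mul, Polynomial.eval_comp,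
    Polynomial.eval_add, Polynomial.eval_C, Polynomial.eval_X]
  have hexp : exp (-sinh (t / 2) * (w * z + cosh (t / 2) * z ^ 2 / 2)) *
      exp (-(w + cosh (t / 2) * z) ^ 2 / 2) = exp (-w ^ 2 / 2) *
        exp (-(cosh (t / 2) * exp (t / 2) / 2) * z ^ 2 + -(exp (t / 2) * w) * z) := by
    rw [← exp_add, ← exp_add, ← cosh_add_sinh (t / 2)]
    congr 1
    ring
  linear_combination (hermiteNorm n * q.eval (w + cosh (t / 2) * z)) * hexp

theorem stmt3_general (N : ℕ) (t x y : ℝ) :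
    ∑ n ∈ Finset.range N, Real.exp (t * n) * hermiteFn n x * hermiteFn n y =
      Real.sqrt ((N : ℝ) / 2) * Real.exp (t * ((N : ℝ) - 1 / 2)) *
        ∫ z in Set.Ioi (0 : ℝ),
          Real.exp (-(Real.sinh (t / 2)) * ((x + y) * z + Real.cosh (t / 2) * z ^ 2)) *
            (hermiteFn N (x + Real.cosh (t / 2) * z) *
                hermiteFn (N - 1) (y + Real.cosh (t / 2) * z) +
              hermiteFn (N - 1) (x + Real.cosh (t / 2) * z) *
                hermiteFn N (y + Real.cosh (t / 2) * z)) := by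
  simp only [← dampedHermite_mul_add_mul]
  set Φ : ℝ → ℝ := fun z => ∑ n ∈ Finset.range N,
    exp (t * n) * dampedHermite t x n z * dampedHermite t y n z
  have hΦ' : ∀ z ∈ Ici (0 : ℝ), HasDerivAt Φ (-(√((N : ℝ) / 2) * exp (t * ((N : ℝ) - 1 / 2)) *
      (dampedHermite t x N z * dampedHermite t y (N - 1) z +
        dampedHermite t x (N - 1) z * dampedHermite t y N z))) z := fun z _ => by
    have h := hasDerivAt_sum_exp_mul_mul_of_ladder (a := fun n : ℕ => √((n : ℝ) / 2))
      (by simp) (fun n => (hasDerivAt_dampedHermite t x n z).congr_deriv (by push_cast; ring))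
      (fun n => (hasDerivAt_dampedHermite t y n z).congr_deriv (by push_cast; ring)) N
    exact h.congr_deriv (by ring)
  have hG := ((isPolyMulGaussian_dampedHermite t x N).mul
    (isPolyMulGaussian_dampedHermite t y (N - 1))).integrableOn_Ioi 0 |>.add
    (((isPolyMulGaussian_dampedHermite t x (N - 1)).mul
      (isPolyMulGaussian_dampedHermite t y N)).integrableOn_Ioi 0)
  have hΦ : Tendsto Φ atTop (𝓝 0) := by
    have h := tendsto_finsetSum (Finset.range N) fun n _ =>
      (((isPolyMulGaussian_dampedHermite t x n).mul
        (isPolyMulGaussian_dampedHermite t y n)).tendsto_atTop).const_mul (exp (t * n))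
    simpa only [mul_zero, Finset.sum_const_zero, ← mul_assoc] using h
  have hFTC := integral_Ioi_of_hasDerivAt_of_tendsto' hΦ' (hG.const_mul _).neg hΦ
  rw [integral_neg, integral_const_mul] at hFTC
  simp only [Φ, dampedHermite_zero] at hFTC
  linarith

/-- Integral representation of the kernel e^{tD} K_N in terms of Hermite functions. -/
theorem stmt3 (N : ℕ) (hN : 1 ≤ N) (t x y : ℝ) :
    ∑ n ∈ Finset.range N, Real.exp (t * n) * hermiteFn n x * hermiteFn n y =
      Real.sqrt ((N : ℝ) / 2) * Real.exp (t * ((N : ℝ) - 1 / 2)) *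
        ∫ z in Set.Ioi (0 : ℝ),
          Real.exp (-(Real.sinh (t / 2)) * ((x + y) * z + Real.cosh (t / 2) * z ^ 2)) *
            (hermiteFn N (x + Real.cosh (t / 2) * z) *
                hermiteFn (N - 1) (y + Real.cosh (t / 2) * z) +
              hermiteFn (N - 1) (x + Real.cosh (t / 2) * z) *
                hermiteFn N (y + Real.cosh (t / 2) * z)) :=
  stmt3_general N t x y
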